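/- arXiv:2305.15300 — 2 statements merged into one kernel-verified Lean document; each statement's English description precedes it below -/
import Mathlib

section
/- Let A = ⊕_{k≥0} A_k be a graded commutative ℂ-algebra with each graded piece A_k finite-dimensional, N = (N_k)_k a submultiplicative graded norm on A, and 𝓕 a submultiplicative graded filtration on A. For homogeneous f ∈ A_k, let χ_𝓕^{hom}(f) := lim_{m→∞} χ_𝓕(f^m)^{1/m} (this limit exists by submultiplicativity of χ_𝓕 and Fekete's lemma), and define the homogenized ray ‖f‖_t^{𝓕,hom} := inf{ Σ_i ‖f_i‖ · (χ_𝓕^{hom}(f_i))^t : f = Σ_i f_i, f_i ∈ A_k }. Then for every t ≥ 0 and every homogeneous f ∈ A_k, lim_{m→∞} (‖f^m‖_t^𝓕)^{1/m} ≤ ‖f‖_t^{𝓕,hom} ≤ ‖f‖_t^𝓕, where the limit on the left exists by submultiplicativity of the ray norms N_t^𝓕 and Fekete's lemma. -/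
open scoped BigOperators
open Filter Classical

noncomputable section

variable {V : Type*} [AddCommGroup V] [Module ℂ V]

/-- A filtration on a complex vector space `V`: a left-continuous, decreasing family of
subspaces which equals `⊤` for `t` small enough and `⊥` for `t` large enough. -/
structure IsFiltration' (F : ℝ → Submodule ℂ V) : Prop where
  antitone : ∀ ⦃s t : ℝ⦄, s ≤ t → F t ≤ F s
  left_cont : ∀ t : ℝ, ∃ ε > 0, ∀ δ : ℝ, 0 < δ → δ < ε → F (t - δ) = F t
  eventually_top : ∃ t₀ : ℝ, ∀ t ≤ t₀, F t = ⊤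
  eventually_bot : ∃ t₁ : ℝ, ∀ t, t₁ ≤ t → F t = ⊥

/-- The weight of a vector with respect to a filtration. -/
def filtWeight (F : ℝ → Submodule ℂ V) (s : V) : ℝ :=
  sSup {l : ℝ | s ∈ F l}

/-- The non-Archimedean norm `χ_𝓕` associated with a filtration. -/
def filtChi (F : ℝ → Submodule ℂ V) (s : V) : ℝ :=
  if s = 0 then 0 else Real.exp (-(filtWeight F s))

/-- The jumping numbers `e_𝓕(j)` of a filtration. -/
def jumpNum (F : ℝ → Submodule ℂ V) (j : ℕ) : ℝ :=
  sSup {t : ℝ | j ≤ Module.finrank ℂ (F t)}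

/-- The norm associated with a Hermitian inner product. -/
def hnorm (c : InnerProductSpace.Core ℂ V) : V → ℝ :=
  fun v => Real.sqrt ((c.inner v v).re)

/-- The `j`-th element of the logarithmic relative spectrum of two norms. -/
def relSpec (N₀ N₁ : V → ℝ) (j : ℕ) : ℝ :=
  sSup {r : ℝ | ∃ W : Submodule ℂ V, Module.finrank ℂ W = j ∧
    r = sInf {x : ℝ | ∃ w ∈ W, w ≠ 0 ∧ x = Real.log (N₁ w / N₀ w)}}

/-- The distance `d_p` between two norms, `p ∈ [1, ∞)`. -/
def dp (p : ℝ) (N₀ N₁ : V → ℝ) : ℝ :=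
  ((∑ j ∈ Finset.Icc 1 (Module.finrank ℂ V), |relSpec N₀ N₁ j| ^ p) /
    (Module.finrank ℂ V : ℝ)) ^ (1 / p)

/-- The distance `d_∞` between two norms. -/
def dInf (N₀ N₁ : V → ℝ) : ℝ :=
  sSup {r : ℝ | ∃ j ∈ Finset.Icc 1 (Module.finrank ℂ V), r = |relSpec N₀ N₁ j|}

/-- A family of vectors is orthonormal with respect to a Hermitian inner product. -/
def OrthonormalFor (c : InnerProductSpace.Core ℂ V) {ι : Type*} (s : ι → V) : Prop :=
  ∀ i j, c.inner (s i) (s j) = if i = j then 1 else 0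

/-- A family of vectors is orthogonal with respect to a Hermitian inner product. -/
def OrthogonalFor (c : InnerProductSpace.Core ℂ V) {ι : Type*} (s : ι → V) : Prop :=
  ∀ i j, i ≠ j → c.inner (s i) (s j) = 0

/-- `c : ℝ → InnerProductSpace.Core ℂ V` is the geodesic ray of Hermitian norms emanating
from `c 0` associated with the filtration `F` via the adapted orthonormal basis `s`:
`s` is orthonormal for `c 0`, `s j ∈ 𝓕^{e_𝓕(j)} V`, and for each `t ≥ 0` the rescaled basis
`(exp (t e_𝓕(i)) • s i)` is orthonormal for `c t`. -/
def IsGeodesicRayFor (F : ℝ → Submodule ℂ V) {n : ℕ} (s : Fin n → V)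
    (c : ℝ → InnerProductSpace.Core ℂ V) : Prop :=
  OrthonormalFor (c 0) s ∧
  (∀ i : Fin n, s i ∈ F (jumpNum F (i.1 + 1))) ∧
  ∀ t : ℝ, 0 ≤ t → ∀ i j : Fin n,
    (c t).inner (Real.exp (t * jumpNum F (i.1 + 1)) • s i)
      (Real.exp (t * jumpNum F (j.1 + 1)) • s j) = if i = j then 1 else 0

/-- A (complex) norm on a vector space. -/
structure IsComplexNorm (N : V → ℝ) : Prop where
  eq_zero_iff : ∀ x : V, N x = 0 ↔ x = 0
  smul : ∀ (a : ℂ) (x : V), N (a • x) = ‖a‖ * N x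
  add_le : ∀ x y : V, N (x + y) ≤ N x + N y


/-- A filtration of a subspace `W` of `A`. -/
structure IsFiltrationOn {A : Type*} [AddCommGroup A] [Module ℂ A]
    (W : Submodule ℂ A) (F : ℝ → Submodule ℂ A) : Prop where
  le : ∀ t : ℝ, F t ≤ W
  antitone : ∀ ⦃s t : ℝ⦄, s ≤ t → F t ≤ F s
  left_cont : ∀ t : ℝ, ∃ ε > 0, ∀ δ : ℝ, 0 < δ → δ < ε → F (t - δ) = F t
  eventually_top : ∃ t₀ : ℝ, ∀ t ≤ t₀, F t = W
  eventually_bot : ∃ t₁ : ℝ, ∀ t, t₁ ≤ t → F t = ⊥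

/-- `N` is a norm on the subspace `W`. -/
structure IsNormOn {A : Type*} [AddCommGroup A] [Module ℂ A]
    (W : Submodule ℂ A) (N : A → ℝ) : Prop where
  eq_zero_iff : ∀ f ∈ W, (N f = 0 ↔ f = 0)
  smul : ∀ (a : ℂ), ∀ f ∈ W, N (a • f) = ‖a‖ * N f
  add_le : ∀ f ∈ W, ∀ g ∈ W, N (f + g) ≤ N f + N g

/-- The envelope ray of norms on a graded piece `W`: decompositions are taken inside `W`. -/
def envRayOn {A : Type*} [AddCommGroup A] [Module ℂ A]
    (W : Submodule ℂ A) (F : ℝ → Submodule ℂ A) (N : A → ℝ) (t : ℝ) (f : A) : ℝ :=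
  sInf {r : ℝ | ∃ (m : ℕ) (g : Fin m → A), (∀ i, g i ∈ W) ∧ f = ∑ i, g i ∧
    r = ∑ i, N (g i) * filtChi F (g i) ^ t}

/-- The homogenized non-Archimedean norm
`χ_𝓕^{hom}(f) := lim_{m→∞} χ_𝓕(f^m)^{1/m}` for `f` in the `k`-th graded piece. -/
noncomputable def chiHom {A : Type*} [CommRing A] [Algebra ℂ A]
    (F : ℕ → ℝ → Submodule ℂ A) (k : ℕ) (f : A) : ℝ :=
  limUnder Filter.atTop (fun m : ℕ => filtChi (F (m * k)) (f ^ m) ^ ((1 : ℝ) / m))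

/-- The homogenized envelope ray on a graded piece `W`. -/
noncomputable def envRayHom {A : Type*} [CommRing A] [Algebra ℂ A]
    (W : Submodule ℂ A) (F : ℕ → ℝ → Submodule ℂ A) (k : ℕ) (N : A → ℝ) (t : ℝ) (f : A) : ℝ :=
  sInf {r : ℝ | ∃ (m : ℕ) (g : Fin m → A), (∀ i, g i ∈ W) ∧ f = ∑ i, g i ∧
    r = ∑ i, N (g i) * chiHom F k (g i) ^ t}

/-!
Both inequalities compare infima over decompositions `f = ∑ gᵢ` into elements of degree `k`.
The right one holds term by term, because `χ^hom ≤ χ`. For the left one, regard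
`ρ(x) = lim ‖x^m‖_t^{1/m}` as the spectral radius of the submultiplicative norm `‖·‖_t^𝓕` on the
commutative graded algebra. As for commuting elements of a Banach algebra, `ρ` is subadditive:
expand `(x + y)^m` binomially and use `‖x^j‖_t ≤ C (ρ(x) + ε)^j`. For a single homogeneous `g`,
`ρ(g) ≤ N(g) χ^hom(g)^t` because `‖g^m‖_t ≤ N(g)^m χ(g^m)^t`. All the limits exist by Fekete's
lemma.
-/

open Finset Topology

section Sequences

theorem eventually_lt_pow_of_submultiplicative {b : ℕ → ℝ} (hb : ∀ m, 0 ≤ b m)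
    (hsub : ∀ m n, b (m + n) ≤ b m * b n) {p : ℕ} (hp : p ≠ 0) {L : ℝ} (hL : 0 < L)
    (hbp : b p < L ^ p) : ∀ᶠ m in atTop, b m < L ^ m := by
  -- Raising `b m` to at least `(L / 2) ^ m` keeps `b` submultiplicative and makes it positive,
  -- so that Fekete's lemma applies to its logarithm.
  set b' : ℕ → ℝ := fun m => max (b m) ((L / 2) ^ m)
  have hb'pos : ∀ m, 0 < b' m := fun m => lt_max_of_lt_right (by positivity)
  have hsub' : Subadditive fun m => Real.log (b' m) := by
    intro m n
    rw [← Real.log_mul (hb'pos m).ne' (hb'pos n).ne']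
    refine Real.log_le_log (hb'pos _) (max_le ((hsub m n).trans ?_) ?_)
    · exact mul_le_mul (le_max_left _ _) (le_max_left _ _) (hb n) (hb'pos m).le
    · rw [pow_add]
      exact mul_le_mul (le_max_right _ _) (le_max_right _ _) (by positivity) (hb'pos m).le
  have hlog : ∀ m, m ≠ 0 → (Real.log (b' m) / m < Real.log L ↔ b' m < L ^ m) := by
    intro m hm
    rw [div_lt_iff₀ (by positivity), mul_comm, ← Real.log_pow,
      Real.log_lt_log_iff (hb'pos m) (by positivity)]
  have hb'p : b' p < L ^ p := max_lt hbp (pow_lt_pow_left₀ (half_lt_self hL) (by positivity) hp)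
  filter_upwards [hsub'.eventually_div_lt_of_div_lt hp ((hlog p hp).2 hb'p),
    eventually_ne_atTop 0] with m hm hm0
  exact (le_max_left _ _).trans_lt ((hlog m hm0).1 hm)

theorem exists_tendsto_root_of_submultiplicative {b : ℕ → ℝ} (hb : ∀ m, 0 ≤ b m)
    (hsub : ∀ m n, b (m + n) ≤ b m * b n) :
    ∃ I, Tendsto (fun m : ℕ => b m ^ ((1 : ℝ) / m)) atTop (𝓝 I) ∧ I ≤ b 1 := by
  set root : ℕ → ℝ := fun m => b m ^ ((1 : ℝ) / m)
  have hbdd : BddBelow (Set.range fun n : ℕ => root (n + 1)) :=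
    ⟨0, by rintro _ ⟨n, rfl⟩; exact Real.rpow_nonneg (hb _) _⟩
  refine ⟨⨅ n : ℕ, root (n + 1), tendsto_order.2 ⟨fun l hl => ?_, fun L hL => ?_⟩,
    by simpa [root] using ciInf_le hbdd 0⟩
  · filter_upwards [eventually_ne_atTop 0] with m hm
    obtain ⟨n, rfl⟩ := Nat.exists_eq_succ_of_ne_zero hm
    exact hl.trans_le (ciInf_le hbdd n)
  · obtain ⟨n, hn⟩ := exists_lt_of_ciInf_lt hL
    have hL0 : 0 < L := (Real.rpow_nonneg (hb _) _).trans_lt hn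
    have hroot : ∀ m, m ≠ 0 → (root m < L ↔ b m < L ^ m) := fun m hm => by
      simp only [root, one_div]
      rw [Real.rpow_inv_lt_iff_of_pos (hb m) hL0.le (by positivity), Real.rpow_natCast]
    filter_upwards [eventually_lt_pow_of_submultiplicative hb hsub n.succ_ne_zero hL0
      ((hroot _ n.succ_ne_zero).1 hn), eventually_ne_atTop 0] with m hm hm0
    exact (hroot m hm0).2 hm

def PowBounded (u : ℕ → ℝ) (r : ℝ) : Prop :=
  ∃ C > 0, ∀ m, u m ≤ C * r ^ m

namespace PowBounded

variable {u v w : ℕ → ℝ} {a b r : ℝ}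

theorem of_eventually_le (hr : 0 < r) (h : ∀ᶠ m in atTop, u m ≤ r ^ m) : PowBounded u r := by
  obtain ⟨M, hM⟩ := eventually_atTop.1 h
  set S := ∑ j ∈ range M, |u j| / r ^ j
  have hS : 0 ≤ S := sum_nonneg fun j _ => by positivity
  refine ⟨1 + S, by positivity, fun m => ?_⟩
  rcases lt_or_ge m M with hm | hm
  · calc u m ≤ |u m| / r ^ m * r ^ m := by
          rw [div_mul_cancel₀ _ (pow_pos hr m).ne']
          exact le_abs_self _
      _ ≤ (1 + S) * r ^ m := by
          gcongr
          exact (single_le_sum (f := fun j => |u j| / r ^ j) (fun j _ => by positivity)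
            (mem_range.2 hm)).trans (le_add_of_nonneg_left zero_le_one)
  · calc u m ≤ 1 * r ^ m := by rw [one_mul]; exact hM m hm
      _ ≤ (1 + S) * r ^ m := by gcongr; linarith

theorem le_of_tendsto_root {L : ℝ} (h : PowBounded u r) (hu : ∀ m, 0 ≤ u m) (hr : 0 ≤ r)
    (hL : Tendsto (fun m : ℕ => u m ^ ((1 : ℝ) / m)) atTop (𝓝 L)) : L ≤ r := by
  obtain ⟨C, hC, hCu⟩ := h
  have hCroot : Tendsto (fun m : ℕ => C ^ ((1 : ℝ) / m) * r) atTop (𝓝 r) := by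
    simpa using (tendsto_const_nhds.rpow tendsto_one_div_atTop_nhds_zero_nat
      (Or.inl hC.ne')).mul_const r
  refine le_of_tendsto_of_tendsto hL hCroot ?_
  filter_upwards [eventually_ne_atTop 0] with m hm
  calc u m ^ ((1 : ℝ) / m) ≤ (C * r ^ m) ^ ((1 : ℝ) / m) :=
        Real.rpow_le_rpow (hu m) (hCu m) (by positivity)
    _ = C ^ ((1 : ℝ) / m) * r := by
        rw [Real.mul_rpow hC.le (by positivity), one_div, Real.pow_rpow_inv_natCast hr hm]

theorem of_le_sum_choose (hu : PowBounded u a) (hv : PowBounded v b) (hu0 : ∀ m, 0 ≤ u m)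
    (hv0 : ∀ m, 0 ≤ v m)
    (hw : ∀ m, w m ≤ ∑ j ∈ range (m + 1), u j * v (m - j) * m.choose j) :
    PowBounded w (a + b) := by
  obtain ⟨C, hC, hCu⟩ := hu
  obtain ⟨D, hD, hDv⟩ := hv
  refine ⟨C * D, mul_pos hC hD, fun m => (hw m).trans ?_⟩
  calc ∑ j ∈ range (m + 1), u j * v (m - j) * m.choose j
      ≤ ∑ j ∈ range (m + 1), C * a ^ j * (D * b ^ (m - j)) * m.choose j :=
        sum_le_sum fun j _ => mul_le_mul_of_nonneg_right
          (mul_le_mul (hCu j) (hDv _) (hv0 _) ((hu0 j).trans (hCu j))) (Nat.cast_nonneg _)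
    _ = C * D * (a + b) ^ m := by
        rw [add_pow, mul_sum]
        exact sum_congr rfl fun j _ => by ring

end PowBounded

end Sequences

theorem le_csInf_mul_csInf {S T : Set ℝ} {c : ℝ} (hS : S.Nonempty) (hT : T.Nonempty)
    (hS0 : ∀ a ∈ S, 0 ≤ a) (hT0 : ∀ b ∈ T, 0 ≤ b) (h : ∀ a ∈ S, ∀ b ∈ T, c ≤ a * b) :
    c ≤ sInf S * sInf T := by
  have hcT : ∀ b ∈ T, c ≤ sInf S * b := fun b hb => by
    rw [mul_comm, ← smul_eq_mul, ← Real.sInf_smul_of_nonneg (hT0 b hb)]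
    refine le_csInf hS.smul_set ?_
    rintro _ ⟨a, ha, rfl⟩
    exact (h a ha b hb).trans_eq (mul_comm _ _)
  rw [← smul_eq_mul, ← Real.sInf_smul_of_nonneg (Real.sInf_nonneg hS0)]
  refine le_csInf hT.smul_set ?_
  rintro _ ⟨b, hb, rfl⟩
  exact hcT b hb

section Filtration

variable {A : Type*} [AddCommGroup A] [Module ℂ A] {W : Submodule ℂ A} {F : ℝ → Submodule ℂ A}

theorem filtChi_nonneg (F : ℝ → Submodule ℂ A) (s : A) : 0 ≤ filtChi F s := by
  unfold filtChi
  split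
  · exact le_rfl
  · exact (Real.exp_pos _).le

theorem IsFiltrationOn.mem_filtWeight (hF : IsFiltrationOn W F) {s : A} (hs : s ∈ W) :
    s ∈ F (filtWeight F s) := by
  obtain ⟨t₀, ht₀⟩ := hF.eventually_top
  obtain ⟨ε, hε, hcont⟩ := hF.left_cont (filtWeight F s)
  obtain ⟨l, hl, hlt⟩ := exists_lt_of_lt_csSup (s := {l | s ∈ F l})
    ⟨t₀, by simpa [ht₀ t₀ le_rfl] using hs⟩ (sub_lt_self (filtWeight F s) (half_pos hε))
  rw [← hcont (ε / 2) (half_pos hε) (half_lt_self hε)]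
  exact hF.antitone hlt.le hl

theorem IsFiltrationOn.le_filtWeight (hF : IsFiltrationOn W F) {s : A} (hs : s ≠ 0) {l : ℝ}
    (hl : s ∈ F l) : l ≤ filtWeight F s := by
  obtain ⟨t₁, ht₁⟩ := hF.eventually_bot
  refine le_csSup ⟨t₁, fun l' hl' => ?_⟩ hl
  by_contra! h
  exact hs (by simpa [ht₁ l' h.le] using hl')

end Filtration

theorem filtChi_mul_le {A : Type*} [Ring A] [Module ℂ A] {W₁ W₂ W₃ : Submodule ℂ A}
    {F₁ F₂ F₃ : ℝ → Submodule ℂ A} (hF₁ : IsFiltrationOn W₁ F₁) (hF₂ : IsFiltrationOn W₂ F₂)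
    (hF₃ : IsFiltrationOn W₃ F₃) (hmul : ∀ s t, ∀ f ∈ F₁ s, ∀ g ∈ F₂ t, f * g ∈ F₃ (s + t))
    {u v : A} (hu : u ∈ W₁) (hv : v ∈ W₂) :
    filtChi F₃ (u * v) ≤ filtChi F₁ u * filtChi F₂ v := by
  by_cases huv : u * v = 0
  · rw [huv, filtChi, if_pos rfl]
    exact mul_nonneg (filtChi_nonneg _ _) (filtChi_nonneg _ _)
  have hu0 : u ≠ 0 := by rintro rfl; simp at huv
  have hv0 : v ≠ 0 := by rintro rfl; simp at huv
  have hweight : filtWeight F₁ u + filtWeight F₂ v ≤ filtWeight F₃ (u * v) :=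
    hF₃.le_filtWeight huv (hmul _ _ _ (hF₁.mem_filtWeight hu) _ (hF₂.mem_filtWeight hv))
  simp only [filtChi, if_neg huv, if_neg hu0, if_neg hv0, ← Real.exp_add]
  exact Real.exp_le_exp.2 (by linarith)

theorem IsNormOn.nonneg {A : Type*} [AddCommGroup A] [Module ℂ A] {W : Submodule ℂ A}
    {N : A → ℝ} (hN : IsNormOn W N) {f : A} (hf : f ∈ W) : 0 ≤ N f := by
  have h0 : N 0 = 0 := (hN.eq_zero_iff 0 W.zero_mem).2 rfl
  have hneg : N (-f) = N f := by simpa using hN.smul (-1) f hf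
  have := hN.add_le f hf (-f) (W.neg_mem hf)
  rw [add_neg_cancel, h0, hneg] at this
  linarith

section Envelope

variable {A : Type*} [AddCommGroup A] [Module ℂ A] {W : Submodule ℂ A} {c : A → ℝ}

def envelopeCosts (W : Submodule ℂ A) (c : A → ℝ) (f : A) : Set ℝ :=
  {r : ℝ | ∃ (m : ℕ) (g : Fin m → A), (∀ i, g i ∈ W) ∧ f = ∑ i, g i ∧ r = ∑ i, c (g i)}

/-- The largest subadditive minorant of `c` on `W`; `envRayOn` and `envRayHom` are of this form. -/
def envelope (W : Submodule ℂ A) (c : A → ℝ) (f : A) : ℝ :=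
  sInf (envelopeCosts W c f)

theorem envRayOn_eq_envelope (W : Submodule ℂ A) (F : ℝ → Submodule ℂ A) (N : A → ℝ) (t : ℝ) :
    envRayOn W F N t = envelope W fun g => N g * filtChi F g ^ t :=
  rfl

theorem IsNormOn.mul_filtChi_rpow_nonneg {N : A → ℝ} (hN : IsNormOn W N)
    (F : ℝ → Submodule ℂ A) (t : ℝ) : ∀ g ∈ W, 0 ≤ N g * filtChi F g ^ t :=
  fun _ hg => mul_nonneg (hN.nonneg hg) (Real.rpow_nonneg (filtChi_nonneg F _) t)

theorem envelopeCosts_nonneg (hc : ∀ g ∈ W, 0 ≤ c g) {f : A} :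
    ∀ r ∈ envelopeCosts W c f, 0 ≤ r := by
  rintro _ ⟨m, g, hg, -, rfl⟩
  exact sum_nonneg fun i _ => hc _ (hg i)

theorem envelopeCosts_nonempty {f : A} (hf : f ∈ W) : (envelopeCosts W c f).Nonempty :=
  ⟨_, 1, fun _ => f, fun _ => hf, by simp, rfl⟩

theorem envelope_nonneg (hc : ∀ g ∈ W, 0 ≤ c g) (f : A) : 0 ≤ envelope W c f :=
  Real.sInf_nonneg (envelopeCosts_nonneg hc)

theorem envelope_le_sum (hc : ∀ g ∈ W, 0 ≤ c g) {ι : Type*} [Fintype ι] {f : A} (g : ι → A)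
    (hg : ∀ i, g i ∈ W) (hf : f = ∑ i, g i) : envelope W c f ≤ ∑ i, c (g i) := by
  let e := Fintype.equivFin ι
  refine csInf_le ⟨0, envelopeCosts_nonneg hc⟩ ⟨_, g ∘ e.symm, fun i => hg _, ?_, ?_⟩
  · rw [hf]
    exact (e.symm.sum_comp g).symm
  · exact (e.symm.sum_comp (c ∘ g)).symm

theorem le_envelope {f : A} {b : ℝ} (hf : f ∈ W)
    (h : ∀ (m : ℕ) (g : Fin m → A), (∀ i, g i ∈ W) → f = ∑ i, g i → b ≤ ∑ i, c (g i)) :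
    b ≤ envelope W c f :=
  le_csInf (envelopeCosts_nonempty hf) <| by
    rintro _ ⟨m, g, hg, hfg, rfl⟩
    exact h m g hg hfg

theorem envelope_le_self (hc : ∀ g ∈ W, 0 ≤ c g) {f : A} (hf : f ∈ W) : envelope W c f ≤ c f := by
  simpa using envelope_le_sum hc (fun _ : Unit => f) (fun _ => hf) (by simp)

theorem envelope_zero (hc : ∀ g ∈ W, 0 ≤ c g) : envelope W c 0 = 0 := by
  refine le_antisymm ?_ (envelope_nonneg hc 0)
  simpa using envelope_le_sum hc (fun i : Empty => i.elim) (fun i => i.elim) (by simp)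

theorem envelope_add_le (hc : ∀ g ∈ W, 0 ≤ c g) {x y : A} (hx : x ∈ W) (hy : y ∈ W) :
    envelope W c (x + y) ≤ envelope W c x + envelope W c y := by
  have hsplit : ∀ (m : ℕ) (g : Fin m → A), (∀ i, g i ∈ W) → x = ∑ i, g i →
      ∀ (m' : ℕ) (h : Fin m' → A), (∀ i, h i ∈ W) → y = ∑ i, h i →
      envelope W c (x + y) ≤ ∑ i, c (g i) + ∑ i, c (h i) := by
    intro m g hg hxg m' h hh hyh
    simpa [Fintype.sum_sum_type] using envelope_le_sum hc (Sum.elim g h)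
      (by rintro (i | i) <;> simp [hg, hh]) (by simp [Fintype.sum_sum_type, hxg, hyh])
  have : envelope W c (x + y) - envelope W c x ≤ envelope W c y :=
    le_envelope hy fun m' h hh hyh => sub_le_comm.1 <|
      le_envelope hx fun m g hg hxg => sub_le_iff_le_add.2 (hsplit m g hg hxg m' h hh hyh)
  linarith

theorem envelope_sum_le (hc : ∀ g ∈ W, 0 ≤ c g) {ι : Type*} (s : Finset ι) (x : ι → A)
    (hx : ∀ i ∈ s, x i ∈ W) : envelope W c (∑ i ∈ s, x i) ≤ ∑ i ∈ s, envelope W c (x i) := by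
  induction s using Finset.induction_on with
  | empty => simp [envelope_zero hc]
  | insert i s hi ih =>
    rw [sum_insert hi, sum_insert hi]
    have hs : ∀ j ∈ s, x j ∈ W := fun j hj => hx j (mem_insert_of_mem hj)
    exact (envelope_add_le hc (hx i (mem_insert_self i s)) (sum_mem hs)).trans
      (add_le_add le_rfl (ih hs))

theorem envelope_nsmul_le (hc : ∀ g ∈ W, 0 ≤ c g) {x : A} (hx : x ∈ W) (n : ℕ) :
    envelope W c (n • x) ≤ n * envelope W c x := by
  simpa using envelope_sum_le hc (range n) (fun _ => x) (fun _ _ => hx)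

theorem envelope_mono {c' : A → ℝ} (hc : ∀ g ∈ W, 0 ≤ c g) (hcc' : ∀ g ∈ W, c g ≤ c' g) {f : A}
    (hf : f ∈ W) : envelope W c f ≤ envelope W c' f :=
  le_envelope hf fun _ g hg hfg =>
    (envelope_le_sum hc g hg hfg).trans (sum_le_sum fun i _ => hcc' _ (hg i))

end Envelope

theorem envelope_mul_le {A : Type*} [Ring A] [Module ℂ A] {W₁ W₂ W₃ : Submodule ℂ A}
    {c₁ c₂ c₃ : A → ℝ} (hc₁ : ∀ g ∈ W₁, 0 ≤ c₁ g) (hc₂ : ∀ g ∈ W₂, 0 ≤ c₂ g)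
    (hc₃ : ∀ g ∈ W₃, 0 ≤ c₃ g)
    (hmul : ∀ g ∈ W₁, ∀ h ∈ W₂, g * h ∈ W₃ ∧ c₃ (g * h) ≤ c₁ g * c₂ h) {u v : A}
    (hu : u ∈ W₁) (hv : v ∈ W₂) :
    envelope W₃ c₃ (u * v) ≤ envelope W₁ c₁ u * envelope W₂ c₂ v := by
  refine le_csInf_mul_csInf (envelopeCosts_nonempty hu) (envelopeCosts_nonempty hv)
    (envelopeCosts_nonneg hc₁) (envelopeCosts_nonneg hc₂) ?_
  rintro _ ⟨m, g, hg, rfl, rfl⟩ _ ⟨m', h, hh, rfl, rfl⟩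
  calc envelope W₃ c₃ ((∑ i, g i) * ∑ j, h j) ≤ ∑ p : Fin m × Fin m', c₃ (g p.1 * h p.2) :=
        envelope_le_sum hc₃ (fun p : Fin m × Fin m' => g p.1 * h p.2)
          (fun p => (hmul _ (hg _) _ (hh _)).1)
          (by rw [sum_mul_sum, Fintype.sum_prod_type])
    _ ≤ ∑ p : Fin m × Fin m', c₁ (g p.1) * c₂ (h p.2) :=
        sum_le_sum fun p _ => (hmul _ (hg _) _ (hh _)).2
    _ = (∑ i, c₁ (g i)) * ∑ j, c₂ (h j) := by rw [sum_mul_sum, Fintype.sum_prod_type]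

section Graded

variable {A : Type*} [CommRing A] [Algebra ℂ A] {𝒜 : ℕ → Submodule ℂ A}
  {N : ℕ → A → ℝ} {F : ℕ → ℝ → Submodule ℂ A} {t : ℝ} {k : ℕ} {x y : A}

variable (𝒜 N) in
structure IsSubmultiplicativeGradedNorm : Prop where
  isNormOn : ∀ k, IsNormOn (𝒜 k) (N k)
  mul_le : ∀ k l, ∀ f ∈ 𝒜 k, ∀ g ∈ 𝒜 l, N (k + l) (f * g) ≤ N k f * N l g

variable (𝒜 F) in
structure IsSubmultiplicativeGradedFiltration : Prop where
  isFiltrationOn : ∀ k, IsFiltrationOn (𝒜 k) (F k)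
  mul_mem : ∀ k l (s t : ℝ), ∀ f ∈ F k s, ∀ g ∈ F l t, f * g ∈ F (k + l) (s + t)

theorem IsSubmultiplicativeGradedFiltration.filtChi_mul_le
    (hF : IsSubmultiplicativeGradedFiltration 𝒜 F) {a b n : ℕ} (hab : a + b = n) {u v : A}
    (hu : u ∈ 𝒜 a) (hv : v ∈ 𝒜 b) : filtChi (F n) (u * v) ≤ filtChi (F a) u * filtChi (F b) v := by
  subst hab
  exact _root_.filtChi_mul_le (hF.isFiltrationOn a) (hF.isFiltrationOn b) (hF.isFiltrationOn (a + b))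
    (hF.mul_mem a b) hu hv

variable (𝒜 N F t k) in
/-- `rayPow 𝒜 N F t k x m` is `‖x ^ m‖_t^𝓕`, for `x` of degree `k`. -/
def rayPow (x : A) (m : ℕ) : ℝ :=
  envRayOn (𝒜 (m * k)) (F (m * k)) (N (m * k)) t (x ^ m)

theorem rayPow_nonneg (hN : ∀ k, IsNormOn (𝒜 k) (N k)) (x : A) (m : ℕ) :
    0 ≤ rayPow 𝒜 N F t k x m :=
  envelope_nonneg ((hN _).mul_filtChi_rpow_nonneg _ t) _

theorem powBounded_rayPow_zero (hN : ∀ k, IsNormOn (𝒜 k) (N k)) :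
    PowBounded (rayPow 𝒜 N F t k 0) 0 := by
  refine ⟨rayPow 𝒜 N F t k 0 0 + 1, add_pos_of_nonneg_of_pos (rayPow_nonneg hN 0 0) one_pos,
    fun m => ?_⟩
  cases m with
  | zero => simp
  | succ m =>
    simp only [rayPow, zero_pow m.succ_ne_zero, envRayOn_eq_envelope,
      envelope_zero ((hN _).mul_filtChi_rpow_nonneg _ t), mul_zero, le_refl]

variable [SetLike.GradedMonoid 𝒜]

theorem pow_mem_graded_mul (hx : x ∈ 𝒜 k) (m : ℕ) : x ^ m ∈ 𝒜 (m * k) := by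
  simpa using SetLike.pow_mem_graded m hx

theorem IsSubmultiplicativeGradedNorm.pow_le (hN : IsSubmultiplicativeGradedNorm 𝒜 N)
    (hx : x ∈ 𝒜 k) {m : ℕ} (hm : m ≠ 0) : N (m * k) (x ^ m) ≤ N k x ^ m := by
  induction m with
  | zero => exact absurd rfl hm
  | succ m ih =>
    rcases eq_or_ne m 0 with rfl | hm0
    · simp
    calc N ((m + 1) * k) (x ^ (m + 1)) ≤ N (m * k) (x ^ m) * N k x := by
          rw [add_one_mul, pow_succ]
          exact hN.mul_le _ _ _ (pow_mem_graded_mul hx m) _ hx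
      _ ≤ N k x ^ m * N k x := mul_le_mul_of_nonneg_right (ih hm0) ((hN.isNormOn k).nonneg hx)
      _ = N k x ^ (m + 1) := (pow_succ _ _).symm

theorem envRayOn_mul_le (hN : IsSubmultiplicativeGradedNorm 𝒜 N)
    (hF : IsSubmultiplicativeGradedFiltration 𝒜 F)
    (ht : 0 ≤ t) {a b n : ℕ} (hab : a + b = n) {u v : A} (hu : u ∈ 𝒜 a) (hv : v ∈ 𝒜 b) :
    envRayOn (𝒜 n) (F n) (N n) t (u * v) ≤
      envRayOn (𝒜 a) (F a) (N a) t u * envRayOn (𝒜 b) (F b) (N b) t v := by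
  subst hab
  simp only [envRayOn_eq_envelope]
  refine envelope_mul_le ((hN.isNormOn a).mul_filtChi_rpow_nonneg _ t)
    ((hN.isNormOn b).mul_filtChi_rpow_nonneg _ t) ((hN.isNormOn (a + b)).mul_filtChi_rpow_nonneg _ t)
    (fun g hg h hh => ⟨SetLike.mul_mem_graded hg hh, ?_⟩) hu hv
  have hχ : filtChi (F (a + b)) (g * h) ^ t ≤ (filtChi (F a) g * filtChi (F b) h) ^ t :=
    Real.rpow_le_rpow (filtChi_nonneg _ _) (hF.filtChi_mul_le rfl hg hh) ht
  calc N (a + b) (g * h) * filtChi (F (a + b)) (g * h) ^ t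
      ≤ (N a g * N b h) * (filtChi (F a) g * filtChi (F b) h) ^ t :=
        mul_le_mul (hN.mul_le a b g hg h hh) hχ (Real.rpow_nonneg (filtChi_nonneg _ _) t)
          (mul_nonneg ((hN.isNormOn a).nonneg hg) ((hN.isNormOn b).nonneg hh))
    _ = N a g * filtChi (F a) g ^ t * (N b h * filtChi (F b) h ^ t) := by
        rw [Real.mul_rpow (filtChi_nonneg _ _) (filtChi_nonneg _ _)]
        ring

theorem rayPow_add_le_mul (hN : IsSubmultiplicativeGradedNorm 𝒜 N)
    (hF : IsSubmultiplicativeGradedFiltration 𝒜 F)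
    (ht : 0 ≤ t) (hx : x ∈ 𝒜 k) (m n : ℕ) :
    rayPow 𝒜 N F t k x (m + n) ≤ rayPow 𝒜 N F t k x m * rayPow 𝒜 N F t k x n := by
  rw [rayPow, pow_add]
  exact envRayOn_mul_le hN hF ht (add_mul m n k).symm (pow_mem_graded_mul hx m)
    (pow_mem_graded_mul hx n)

theorem rayPow_add_le_sum_choose (hN : IsSubmultiplicativeGradedNorm 𝒜 N)
    (hF : IsSubmultiplicativeGradedFiltration 𝒜 F)
    (ht : 0 ≤ t) (hx : x ∈ 𝒜 k) (hy : y ∈ 𝒜 k) (m : ℕ) :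
    rayPow 𝒜 N F t k (x + y) m ≤ ∑ j ∈ range (m + 1),
      rayPow 𝒜 N F t k x j * rayPow 𝒜 N F t k y (m - j) * m.choose j := by
  have hcost := (hN.isNormOn (m * k)).mul_filtChi_rpow_nonneg (F (m * k)) t
  have hdeg : ∀ j ∈ range (m + 1), j * k + (m - j) * k = m * k := fun j hj => by
    rw [← add_mul, Nat.add_sub_cancel' (mem_range_succ_iff.1 hj)]
  have hterm : ∀ j ∈ range (m + 1), x ^ j * y ^ (m - j) ∈ 𝒜 (m * k) := fun j hj =>
    hdeg j hj ▸ SetLike.mul_mem_graded (pow_mem_graded_mul hx j) (pow_mem_graded_mul hy (m - j))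
  calc rayPow 𝒜 N F t k (x + y) m
      = envRayOn (𝒜 (m * k)) (F (m * k)) (N (m * k)) t
          (∑ j ∈ range (m + 1), m.choose j • (x ^ j * y ^ (m - j))) := by
        simp only [rayPow, add_pow, nsmul_eq_mul']
    _ ≤ ∑ j ∈ range (m + 1), envRayOn (𝒜 (m * k)) (F (m * k)) (N (m * k)) t
          (m.choose j • (x ^ j * y ^ (m - j))) := by
        simp only [envRayOn_eq_envelope]
        exact envelope_sum_le hcost _ _ fun j hj => nsmul_mem (hterm j hj) _
    _ ≤ ∑ j ∈ range (m + 1), m.choose j *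
          envRayOn (𝒜 (m * k)) (F (m * k)) (N (m * k)) t (x ^ j * y ^ (m - j)) := by
        simp only [envRayOn_eq_envelope]
        exact sum_le_sum fun j hj => envelope_nsmul_le hcost (hterm j hj) _
    _ ≤ ∑ j ∈ range (m + 1),
          rayPow 𝒜 N F t k x j * rayPow 𝒜 N F t k y (m - j) * m.choose j := by
        refine sum_le_sum fun j hj => ?_
        rw [mul_comm]
        exact mul_le_mul_of_nonneg_right (envRayOn_mul_le hN hF ht (hdeg j hj)
          (pow_mem_graded_mul hx j) (pow_mem_graded_mul hy (m - j))) (Nat.cast_nonneg _)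

theorem filtChi_pow_add_le (hF : IsSubmultiplicativeGradedFiltration 𝒜 F)
    (hx : x ∈ 𝒜 k) (m n : ℕ) :
    filtChi (F ((m + n) * k)) (x ^ (m + n)) ≤
      filtChi (F (m * k)) (x ^ m) * filtChi (F (n * k)) (x ^ n) := by
  rw [pow_add]
  exact hF.filtChi_mul_le (add_mul m n k).symm (pow_mem_graded_mul hx m) (pow_mem_graded_mul hx n)

theorem exists_tendsto_filtChi_root (hF : IsSubmultiplicativeGradedFiltration 𝒜 F)
    (hx : x ∈ 𝒜 k) :
    ∃ I, Tendsto (fun m : ℕ => filtChi (F (m * k)) (x ^ m) ^ ((1 : ℝ) / m)) atTop (𝓝 I) ∧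
      I ≤ filtChi (F k) x := by
  obtain ⟨I, hI, hI1⟩ := exists_tendsto_root_of_submultiplicative
    (b := fun m => filtChi (F (m * k)) (x ^ m)) (fun m => filtChi_nonneg _ _)
    (filtChi_pow_add_le hF hx)
  exact ⟨I, hI, by simpa using hI1⟩

theorem tendsto_chiHom (hF : IsSubmultiplicativeGradedFiltration 𝒜 F)
    (hx : x ∈ 𝒜 k) :
    Tendsto (fun m : ℕ => filtChi (F (m * k)) (x ^ m) ^ ((1 : ℝ) / m)) atTop
      (𝓝 (chiHom F k x)) := by
  obtain ⟨I, hI, -⟩ := exists_tendsto_filtChi_root hF hx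
  rwa [chiHom, hI.limUnder_eq]

theorem chiHom_le_filtChi (hF : IsSubmultiplicativeGradedFiltration 𝒜 F)
    (hx : x ∈ 𝒜 k) : chiHom F k x ≤ filtChi (F k) x := by
  obtain ⟨I, hI, hI1⟩ := exists_tendsto_filtChi_root hF hx
  rwa [chiHom, hI.limUnder_eq]

theorem chiHom_nonneg (hF : IsSubmultiplicativeGradedFiltration 𝒜 F)
    (hx : x ∈ 𝒜 k) : 0 ≤ chiHom F k x :=
  ge_of_tendsto' (tendsto_chiHom hF hx) fun _ => Real.rpow_nonneg (filtChi_nonneg _ _) _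

theorem powBounded_rayPow (hN : IsSubmultiplicativeGradedNorm 𝒜 N)
    (hF : IsSubmultiplicativeGradedFiltration 𝒜 F)
    (ht : 0 ≤ t) (hx : x ∈ 𝒜 k) {s r : ℝ} (hs : chiHom F k x < s) (hr : N k x * s ^ t < r) :
    PowBounded (rayPow 𝒜 N F t k x) r := by
  have hs0 : 0 < s := (chiHom_nonneg hF hx).trans_lt hs
  have hNx : 0 ≤ N k x := (hN.isNormOn k).nonneg hx
  refine PowBounded.of_eventually_le ((mul_nonneg hNx (by positivity)).trans_lt hr) ?_
  filter_upwards [(tendsto_chiHom hF hx).eventually_lt_const hs, eventually_ne_atTop 0]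
    with m hm hm0
  have hχ : filtChi (F (m * k)) (x ^ m) ≤ s ^ m := by
    rw [one_div, Real.rpow_inv_lt_iff_of_pos (filtChi_nonneg _ _) hs0.le (by positivity),
      Real.rpow_natCast] at hm
    exact hm.le
  calc rayPow 𝒜 N F t k x m ≤ N (m * k) (x ^ m) * filtChi (F (m * k)) (x ^ m) ^ t :=
        envelope_le_self ((hN.isNormOn _).mul_filtChi_rpow_nonneg _ t) (pow_mem_graded_mul hx m)
    _ ≤ N k x ^ m * (s ^ m) ^ t :=
        mul_le_mul (hN.pow_le hx hm0)
          (Real.rpow_le_rpow (filtChi_nonneg _ _) hχ ht) (Real.rpow_nonneg (filtChi_nonneg _ _) t)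
          (pow_nonneg hNx m)
    _ = (N k x * s ^ t) ^ m := by rw [mul_pow, Real.rpow_pow_comm hs0.le]
    _ ≤ r ^ m := pow_le_pow_left₀ (mul_nonneg hNx (by positivity)) hr.le m

theorem powBounded_rayPow_sum (hN : IsSubmultiplicativeGradedNorm 𝒜 N)
    (hF : IsSubmultiplicativeGradedFiltration 𝒜 F)
    (ht : 0 ≤ t) {ι : Type*} (s : Finset ι) {g : ι → A} (hg : ∀ i ∈ s, g i ∈ 𝒜 k)
    {r : ι → ℝ} (hr : ∀ i ∈ s, PowBounded (rayPow 𝒜 N F t k (g i)) (r i)) :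
    PowBounded (rayPow 𝒜 N F t k (∑ i ∈ s, g i)) (∑ i ∈ s, r i) := by
  induction s using Finset.induction_on with
  | empty => simpa using powBounded_rayPow_zero hN.isNormOn
  | insert i s hi ih =>
    rw [sum_insert hi, sum_insert hi]
    have hgs : ∀ j ∈ s, g j ∈ 𝒜 k := fun j hj => hg j (mem_insert_of_mem hj)
    exact (hr i (mem_insert_self i s)).of_le_sum_choose
      (ih hgs fun j hj => hr j (mem_insert_of_mem hj)) (rayPow_nonneg hN.isNormOn _)
      (rayPow_nonneg hN.isNormOn _)
      (rayPow_add_le_sum_choose hN hF ht (hg i (mem_insert_self i s)) (sum_mem hgs))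

theorem le_envRayHom_of_tendsto (hN : IsSubmultiplicativeGradedNorm 𝒜 N)
    (hF : IsSubmultiplicativeGradedFiltration 𝒜 F)
    (ht : 0 ≤ t) {f : A} (hf : f ∈ 𝒜 k) {L : ℝ}
    (hL : Tendsto (fun m : ℕ => rayPow 𝒜 N F t k f m ^ ((1 : ℝ) / m)) atTop (𝓝 L)) :
    L ≤ envRayHom (𝒜 k) F k (N k) t f := by
  refine le_csInf ⟨_, 1, fun _ => f, fun _ => hf, by simp, rfl⟩ ?_
  rintro _ ⟨n, g, hg, rfl, rfl⟩
  set bound : ℝ → ℝ := fun ε => ∑ i, (N k (g i) + ε) * (chiHom F k (g i) + ε) ^ t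
  have hbound : ∀ ε > 0, L ≤ bound ε := fun ε hε => by
    refine (powBounded_rayPow_sum hN hF ht univ (fun i _ => hg i) fun i _ =>
      powBounded_rayPow hN hF ht (hg i) (lt_add_of_pos_right _ hε) ?_).le_of_tendsto_root
      (rayPow_nonneg hN.isNormOn _) ?_ hL
    · exact mul_lt_mul_of_pos_right (lt_add_of_pos_right _ hε)
        (Real.rpow_pos_of_pos (by linarith [chiHom_nonneg hF (hg i)]) t)
    · exact sum_nonneg fun i _ => mul_nonneg (by linarith [(hN.isNormOn k).nonneg (hg i)])
        (Real.rpow_nonneg (by linarith [chiHom_nonneg hF (hg i)]) t)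
  have hcont : Continuous bound := continuous_finsetSum _ fun i _ =>
    (continuous_const.add continuous_id).mul
      ((Real.continuous_rpow_const ht).comp (continuous_const.add continuous_id))
  have hlim : Tendsto bound (𝓝[>] 0) (𝓝 (∑ i, N k (g i) * chiHom F k (g i) ^ t)) := by
    simpa [bound] using (hcont.tendsto 0).mono_left nhdsWithin_le_nhds
  exact ge_of_tendsto hlim (eventually_nhdsWithin_of_forall hbound)

theorem envRayHom_le_envRayOn (hN : ∀ k, IsNormOn (𝒜 k) (N k))
    (hF : IsSubmultiplicativeGradedFiltration 𝒜 F)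
    (ht : 0 ≤ t) {f : A} (hf : f ∈ 𝒜 k) :
    envRayHom (𝒜 k) F k (N k) t f ≤ envRayOn (𝒜 k) (F k) (N k) t f :=
  envelope_mono (c := fun g => N k g * chiHom F k g ^ t)
    (fun _ hg => mul_nonneg ((hN k).nonneg hg) (Real.rpow_nonneg (chiHom_nonneg hF hg) t))
    (fun _ hg => mul_le_mul_of_nonneg_left
      (Real.rpow_le_rpow (chiHom_nonneg hF hg) (chiHom_le_filtChi hF hg) ht)
      ((hN k).nonneg hg)) hf

end Graded

theorem envRay_homogenization_general
    {A : Type*} [CommRing A] [Algebra ℂ A] (𝒜 : ℕ → Submodule ℂ A) [GradedAlgebra 𝒜]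
    (N : ℕ → A → ℝ) (hN : ∀ k : ℕ, IsNormOn (𝒜 k) (N k))
    (hNsub : ∀ (k l : ℕ), ∀ f ∈ 𝒜 k, ∀ g ∈ 𝒜 l, N (k + l) (f * g) ≤ N k f * N l g)
    (F : ℕ → ℝ → Submodule ℂ A) (hF : ∀ k : ℕ, IsFiltrationOn (𝒜 k) (F k))
    (hFsub : ∀ (k l : ℕ) (s t : ℝ), ∀ f ∈ F k s, ∀ g ∈ F l t, f * g ∈ F (k + l) (s + t)) :
    ∀ t : ℝ, 0 ≤ t → ∀ (k : ℕ), ∀ f ∈ 𝒜 k,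
      Filter.Tendsto (fun m : ℕ => filtChi (F (m * k)) (f ^ m) ^ ((1 : ℝ) / m))
        Filter.atTop (nhds (chiHom F k f)) ∧
      (∃ L : ℝ,
        Filter.Tendsto
          (fun m : ℕ => envRayOn (𝒜 (m * k)) (F (m * k)) (N (m * k)) t (f ^ m) ^ ((1 : ℝ) / m))
          Filter.atTop (nhds L) ∧
        L ≤ envRayHom (𝒜 k) F k (N k) t f) ∧
      envRayHom (𝒜 k) F k (N k) t f ≤ envRayOn (𝒜 k) (F k) (N k) t f := by
  intro t ht k f hf
  have hN' : IsSubmultiplicativeGradedNorm 𝒜 N := ⟨hN, hNsub⟩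
  have hF' : IsSubmultiplicativeGradedFiltration 𝒜 F := ⟨hF, hFsub⟩
  obtain ⟨L, hL, -⟩ := exists_tendsto_root_of_submultiplicative (rayPow_nonneg hN f)
    (rayPow_add_le_mul hN' hF' ht hf)
  exact ⟨tendsto_chiHom hF' hf, ⟨L, hL, le_envRayHom_of_tendsto hN' hF' ht hf hL⟩,
    envRayHom_le_envRayOn hN hF' ht hf⟩

/-- for every `t ≥ 0` and homogeneous `f ∈ A_k`, the limit
`lim_{m→∞} (‖f^m‖_t^𝓕)^{1/m}` exists and
`lim_{m→∞} (‖f^m‖_t^𝓕)^{1/m} ≤ ‖f‖_t^{𝓕,hom} ≤ ‖f‖_t^𝓕`; moreover the limits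
`χ_𝓕^{hom}(g) = lim χ_𝓕(g^m)^{1/m}` exist for homogeneous `g`. -/
theorem envRay_homogenization
    {A : Type*} [CommRing A] [Algebra ℂ A] (𝒜 : ℕ → Submodule ℂ A) [GradedAlgebra 𝒜]
    (hfd : ∀ k : ℕ, FiniteDimensional ℂ (𝒜 k))
    (N : ℕ → A → ℝ) (hN : ∀ k : ℕ, IsNormOn (𝒜 k) (N k))
    (hNsub : ∀ (k l : ℕ), ∀ f ∈ 𝒜 k, ∀ g ∈ 𝒜 l, N (k + l) (f * g) ≤ N k f * N l g)
    (F : ℕ → ℝ → Submodule ℂ A) (hF : ∀ k : ℕ, IsFiltrationOn (𝒜 k) (F k))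
    (hFsub : ∀ (k l : ℕ) (s t : ℝ), ∀ f ∈ F k s, ∀ g ∈ F l t, f * g ∈ F (k + l) (s + t)) :
    ∀ t : ℝ, 0 ≤ t → ∀ (k : ℕ), ∀ f ∈ 𝒜 k,
      Filter.Tendsto (fun m : ℕ => filtChi (F (m * k)) (f ^ m) ^ ((1 : ℝ) / m))
        Filter.atTop (nhds (chiHom F k f)) ∧
      (∃ L : ℝ,
        Filter.Tendsto
          (fun m : ℕ => envRayOn (𝒜 (m * k)) (F (m * k)) (N (m * k)) t (f ^ m) ^ ((1 : ℝ) / m))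
          Filter.atTop (nhds L) ∧
        L ≤ envRayHom (𝒜 k) F k (N k) t f) ∧
      envRayHom (𝒜 k) F k (N k) t f ≤ envRayOn (𝒜 k) (F k) (N k) t f :=
  envRay_homogenization_general 𝒜 N hN hNsub F hF hFsub
end
end

section
/- Let V be an n-dimensional complex vector space (n ≥ 1), H₀, H₁ two Hermitian norms on V, and e₁,…,e_n a basis of V orthogonal with respect to both inner products with ‖e_i‖_{H₀} = 1 for all i. Define the distinguished geodesic H_t (t ∈ [0,1]) as the Hermitian norm diagonalized by e₁,…,e_n with ‖e_i‖_{H_t} := ‖e_i‖_{H₁}^t. Then for every p ∈ [1,∞] and all s, t ∈ [0,1]: d_p(H_s, H_t) = |t − s| · d_p(H₀, H₁). -/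
open scoped BigOperators
open Filter Classical

noncomputable section

variable {V : Type*} [AddCommGroup V] [Module ℂ V]

/-!
All the norms involved are diagonal in the basis `e`: `‖w‖² = ∑ |wᵢ|² uᵢ²`. For diagonal norms
with weights `u` and `u · exp m`, the min-max definition of `μ_j` yields the `j`-th largest `mᵢ`:
the span of the basis vectors carrying the `j` largest exponents is a `j`-dimensional subspace
on which the log-ratio is at least that value, and every `j`-dimensional subspace meets the span
of the basis vectors carrying the `n - j + 1` smallest exponents, where it is at most that value.
Since `‖eᵢ‖_{H_τ} = exp (τ aᵢ)` with `aᵢ = log ‖eᵢ‖_{H₁}`, the relative spectrum of `(H_s, H_t)`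
is, up to order, `((t - s) aᵢ)ᵢ`, and `d_p` only sees the spectrum as a multiset.
-/
open Module Finset

def diagNorm {ι : Type*} [Fintype ι] (e : Basis ι ℂ V) (u : ι → ℝ) (w : V) : ℝ :=
  √(∑ i, ‖e.repr w i‖ ^ 2 * u i ^ 2)

section Hermitian

variable {ι : Type*} [Fintype ι] (c : InnerProductSpace.Core ℂ V)

theorem hnorm_pos {v : V} (hv : v ≠ 0) : 0 < hnorm c v := by
  let _ : NormedAddCommGroup V := @InnerProductSpace.Core.toNormedAddCommGroup ℂ V _ _ _ c
  exact norm_pos_iff.mpr hv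

theorem hnorm_sq_eq_sum_of_orthogonalFor (e : Basis ι ℂ V) (he : OrthogonalFor c e) (w : V) :
    hnorm c w ^ 2 = ∑ i, ‖e.repr w i‖ ^ 2 * hnorm c (e i) ^ 2 := by
  let _ : NormedAddCommGroup V := @InnerProductSpace.Core.toNormedAddCommGroup ℂ V _ _ _ c
  let _ : InnerProductSpace ℂ V := InnerProductSpace.ofCore c.toCore
  -- `hnorm c` is definitionally the norm of the inner product space built from `c`
  change ‖w‖ ^ 2 = ∑ i, ‖e.repr w i‖ ^ 2 * ‖e i‖ ^ 2
  have pythagoras : inner ℂ w w = ∑ i, inner ℂ (e.repr w i • e i) (e.repr w i • e i) := by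
    conv_lhs => rw [← e.sum_repr w]
    simp only [sum_inner, inner_sum]
    refine Finset.sum_congr rfl fun i _ => Finset.sum_eq_single i (fun j _ hji => ?_) (by simp)
    rw [inner_smul_left, inner_smul_right, he j i hji, mul_zero, mul_zero]
  rw [norm_sq_eq_re_inner (𝕜 := ℂ), pythagoras, map_sum]
  simp only [← norm_sq_eq_re_inner (𝕜 := ℂ), norm_smul, mul_pow]

theorem hnorm_eq_diagNorm (e : Basis ι ℂ V) (he : OrthogonalFor c e) :
    hnorm c = diagNorm e fun i => hnorm c (e i) := funext fun w => by
  rw [diagNorm, ← hnorm_sq_eq_sum_of_orthogonalFor c e he]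
  exact (Real.sqrt_sq (Real.sqrt_nonneg _)).symm

end Hermitian

section DiagNorm

variable {ι : Type*} [Fintype ι] (e : Basis ι ℂ V)

theorem diagNorm_reindex {ι' : Type*} [Fintype ι'] (σ : ι ≃ ι') (u : ι' → ℝ) :
    diagNorm (e.reindex σ) u = diagNorm e (u ∘ σ) := funext fun w => by
  simp only [diagNorm, Basis.repr_reindex, Finsupp.mapDomain_equiv_apply, Function.comp_apply]
  rw [← σ.sum_comp]
  simp only [Equiv.symm_apply_apply]

theorem diagNorm_const_mul (a : ℝ) (u : ι → ℝ) (w : V) :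
    diagNorm e (fun i => a * u i) w = |a| * diagNorm e u w := by
  simp only [diagNorm, mul_pow, mul_left_comm _ (a ^ 2), ← Finset.mul_sum]
  rw [Real.sqrt_mul (sq_nonneg a), Real.sqrt_sq_eq_abs]

theorem diagNorm_le_diagNorm {u v : ι → ℝ} {w : V}
    (h : ∀ i, e.repr w i ≠ 0 → u i ^ 2 ≤ v i ^ 2) :
    diagNorm e u w ≤ diagNorm e v w := by
  refine Real.sqrt_le_sqrt (Finset.sum_le_sum fun i _ => ?_)
  by_cases hi : e.repr w i = 0
  · simp [hi]
  · exact mul_le_mul_of_nonneg_left (h i hi) (sq_nonneg _)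

theorem diagNorm_pos {u : ι → ℝ} (hu : ∀ i, u i ≠ 0) {w : V} (hw : w ≠ 0) :
    0 < diagNorm e u w := by
  obtain ⟨i, hi⟩ : ∃ i, e.repr w i ≠ 0 := by
    by_contra! h
    exact hw (e.ext_elem fun i => by simp [h i])
  refine Real.sqrt_pos.mpr (Finset.sum_pos' (fun i _ => by positivity) ⟨i, mem_univ i, ?_⟩)
  have := hu i
  positivity

theorem le_log_diagNorm_div {u : ι → ℝ} (hu : ∀ i, 0 < u i) (m : ι → ℝ) {w : V} (hw : w ≠ 0)
    {b : ℝ} (hb : ∀ i, e.repr w i ≠ 0 → b ≤ m i) :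
    b ≤ Real.log (diagNorm e (fun i => u i * Real.exp (m i)) w / diagNorm e u w) := by
  have hu0 := diagNorm_pos e (fun i => (hu i).ne') hw
  have hu1 := diagNorm_pos e (fun i => (mul_pos (hu i) (Real.exp_pos (m i))).ne') hw
  rw [Real.le_log_iff_exp_le (div_pos hu1 hu0), le_div_iff₀ hu0,
    ← abs_of_pos (Real.exp_pos b), ← diagNorm_const_mul]
  refine diagNorm_le_diagNorm e fun i hi => pow_le_pow_left₀ (by have := hu i; positivity) ?_ 2
  rw [mul_comm]
  gcongr
  · exact (hu i).le
  · exact hb i hi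

theorem log_diagNorm_div_le {u : ι → ℝ} (hu : ∀ i, 0 < u i) (m : ι → ℝ) {w : V} (hw : w ≠ 0)
    {b : ℝ} (hb : ∀ i, e.repr w i ≠ 0 → m i ≤ b) :
    Real.log (diagNorm e (fun i => u i * Real.exp (m i)) w / diagNorm e u w) ≤ b := by
  have h := le_log_diagNorm_div e (fun i => mul_pos (hu i) (Real.exp_pos (m i))) (-m) hw
    (b := -b) fun i hi => neg_le_neg (hb i hi)
  simp only [Pi.neg_apply, mul_assoc, ← Real.exp_add, add_neg_cancel, Real.exp_zero,
    mul_one] at h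
  rwa [← inv_div, Real.log_inv, neg_le_neg_iff] at h

end DiagNorm

section Span

variable {ι : Type*} (e : Basis ι ℂ V)

theorem finrank_span_basis_image (s : Finset ι) :
    finrank ℂ (Submodule.span ℂ (e '' s)) = #s := by
  classical
  rw [finrank_span_set_eq_card (e.linearIndependent.linearIndepOn _).id_image, Set.toFinset_card,
    Set.card_image_of_injective _ e.injective]
  simp

theorem mem_of_mem_span_basis_image {s : Set ι} {w : V} (hw : w ∈ Submodule.span ℂ (e '' s))
    {i : ι} (hi : e.repr w i ≠ 0) : i ∈ s :=
  e.mem_span_image.mp hw (Finsupp.mem_support_iff.mpr hi)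

end Span

theorem exists_ne_zero_mem_of_finrank_lt_add [FiniteDimensional ℂ V] {W U : Submodule ℂ V}
    (h : finrank ℂ V < finrank ℂ W + finrank ℂ U) : ∃ w ∈ W, w ∈ U ∧ w ≠ 0 := by
  by_contra! hWU
  exact h.not_ge (Submodule.finrank_add_finrank_le_of_disjoint (Submodule.disjoint_def.mpr hWU))

theorem relSpec_eq_of_bounds [FiniteDimensional ℂ V] {N₀ N₁ : V → ℝ} {j : ℕ} {μ L : ℝ}
    (hL : ∀ w ≠ 0, L ≤ Real.log (N₁ w / N₀ w))
    (W : Submodule ℂ V) (hW : finrank ℂ W = j)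
    (hμW : ∀ w ∈ W, w ≠ 0 → μ ≤ Real.log (N₁ w / N₀ w))
    (U : Submodule ℂ V) (hU : finrank ℂ V < j + finrank ℂ U)
    (hμU : ∀ w ∈ U, w ≠ 0 → Real.log (N₁ w / N₀ w) ≤ μ) :
    relSpec N₀ N₁ j = μ := by
  set I : Submodule ℂ V → Set ℝ := fun W => {x | ∃ w ∈ W, w ≠ 0 ∧ x = Real.log (N₁ w / N₀ w)}
  have hI_le : ∀ W' : Submodule ℂ V, finrank ℂ W' = j → sInf (I W') ≤ μ := by
    intro W' hW'
    obtain ⟨w, hwW', hwU, hw⟩ := exists_ne_zero_mem_of_finrank_lt_add (hW' ▸ hU)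
    have hI_bdd : BddBelow (I W') := ⟨L, by rintro _ ⟨v, -, hv, rfl⟩; exact hL v hv⟩
    exact (csInf_le hI_bdd ⟨w, hwW', hw, rfl⟩).trans (hμU w hwU hw)
  have hW_ne : W ≠ ⊥ := by
    rintro rfl
    rw [finrank_bot] at hW
    subst hW
    have := Submodule.finrank_le U
    omega
  obtain ⟨w₀, hw₀W, hw₀⟩ := Submodule.exists_mem_ne_zero_of_ne_bot hW_ne
  have hIW : sInf (I W) = μ := le_antisymm (hI_le W hW)
    (le_csInf ⟨_, ⟨w₀, hw₀W, hw₀, rfl⟩⟩ fun _ ⟨w, hw, hw0, hx⟩ => hx ▸ hμW w hw hw0)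
  refine IsGreatest.csSup_eq ⟨⟨W, hW, hIW.symm⟩, ?_⟩
  rintro _ ⟨W', hW', rfl⟩
  exact hI_le W' hW'

theorem sum_Icc_one_eq_sum_fin {M : Type*} [AddCommMonoid M] (n : ℕ) (g : ℕ → M) :
    ∑ j ∈ Icc 1 n, g j = ∑ j : Fin n, g (j + 1) := by
  rw [Fin.sum_univ_eq_sum_range (fun j => g (j + 1)), range_eq_Ico, sum_Ico_add']
  rfl

section Spectrum

variable {n : ℕ} (e : Basis (Fin n) ℂ V) {u : Fin n → ℝ}

theorem relSpec_diagNorm_of_antitone (hu : ∀ i, 0 < u i) {m : Fin n → ℝ} (hm : Antitone m)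
    (j : Fin n) :
    relSpec (diagNorm e u) (diagNorm e fun i => u i * Real.exp (m i)) (j + 1) = m j := by
  have := e.finiteDimensional_of_finite
  refine relSpec_eq_of_bounds (L := ⨅ i, m i) ?_ (Submodule.span ℂ (e '' ↑(Iic j)))
    (finrank_span_basis_image e _ ▸ Fin.card_Iic j) ?_ (Submodule.span ℂ (e '' ↑(Ici j))) ?_ ?_
  · intro w hw
    exact le_log_diagNorm_div e hu m hw fun i _ => ciInf_le (Set.finite_range m).bddBelow i
  · intro w hw hw0
    exact le_log_diagNorm_div e hu m hw0 fun i hi =>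
      hm (mem_Iic.mp (mem_of_mem_span_basis_image e hw hi))
  · rw [finrank_span_basis_image, Fin.card_Ici, finrank_eq_card_basis e, Fintype.card_fin]
    omega
  · intro w hw hw0
    exact log_diagNorm_div_le e hu m hw0 fun i hi =>
      hm (mem_Ici.mp (mem_of_mem_span_basis_image e hw hi))

theorem exists_perm_relSpec_diagNorm (hu : ∀ i, 0 < u i) (m : Fin n → ℝ) :
    ∃ σ : Equiv.Perm (Fin n), ∀ j : Fin n,
      relSpec (diagNorm e u) (diagNorm e fun i => u i * Real.exp (m i)) (j + 1) = m (σ j) := by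
  let σ : Equiv.Perm (Fin n) := Fin.revPerm.trans (Tuple.sort m)
  have hσ : Antitone (m ∘ σ) := fun i j hij => Tuple.monotone_sort m (Fin.rev_le_rev.mpr hij)
  have hreindex (v : Fin n → ℝ) : diagNorm e v = diagNorm (e.reindex σ.symm) (v ∘ σ) := by
    rw [diagNorm_reindex]
    simp [Function.comp_def]
  refine ⟨σ, fun j => ?_⟩
  rw [hreindex u, hreindex]
  exact relSpec_diagNorm_of_antitone _ (fun i => hu (σ i)) hσ j

theorem dp_diagNorm (hu : ∀ i, 0 < u i) (m : Fin n → ℝ) (p : ℝ) :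
    dp p (diagNorm e u) (diagNorm e fun i => u i * Real.exp (m i)) =
      ((∑ i, |m i| ^ p) / n) ^ (1 / p) := by
  obtain ⟨σ, hσ⟩ := exists_perm_relSpec_diagNorm e hu m
  rw [dp, finrank_eq_card_basis e, Fintype.card_fin, sum_Icc_one_eq_sum_fin]
  simp only [hσ]
  rw [Equiv.sum_comp σ fun i => |m i| ^ p]

theorem dInf_diagNorm (hu : ∀ i, 0 < u i) (m : Fin n → ℝ) :
    dInf (diagNorm e u) (diagNorm e fun i => u i * Real.exp (m i)) = ⨆ i, |m i| := by
  obtain ⟨σ, hσ⟩ := exists_perm_relSpec_diagNorm e hu m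
  rw [dInf, finrank_eq_card_basis e, Fintype.card_fin, iSup]
  congr 1
  ext r
  constructor
  · rintro ⟨j, hj, rfl⟩
    obtain ⟨hj1, hjn⟩ := mem_Icc.mp hj
    obtain ⟨k, rfl⟩ : ∃ k : Fin n, (k : ℕ) + 1 = j := ⟨⟨j - 1, by omega⟩, by simp; omega⟩
    exact ⟨σ k, (congrArg _ (hσ k)).symm⟩
  · rintro ⟨i, rfl⟩
    refine ⟨σ.symm i + 1, mem_Icc.mpr ⟨by omega, (σ.symm i).isLt⟩, ?_⟩
    rw [hσ, Equiv.apply_symm_apply]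

end Spectrum

section Geodesic

variable {n : ℕ} (e : Basis (Fin n) ℂ V) (a : Fin n → ℝ) (s t : ℝ)

theorem diagNorm_exp_mul_eq :
    (diagNorm e fun i => Real.exp (t * a i)) =
      diagNorm e fun i => Real.exp (s * a i) * Real.exp ((t - s) * a i) := by
  simp only [← Real.exp_add, ← add_mul, add_sub_cancel]

theorem dp_diagNorm_exp_mul {p : ℝ} (hp : p ≠ 0) :
    dp p (diagNorm e fun i => Real.exp (s * a i)) (diagNorm e fun i => Real.exp (t * a i)) =
      |t - s| * ((∑ i, |a i| ^ p) / n) ^ (1 / p) := by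
  rw [diagNorm_exp_mul_eq e a s t, dp_diagNorm e (fun i => Real.exp_pos _)]
  simp only [abs_mul, Real.mul_rpow (abs_nonneg _) (abs_nonneg _), ← mul_sum, mul_div_assoc]
  rw [Real.mul_rpow (by positivity) (by positivity), one_div, Real.rpow_rpow_inv (abs_nonneg _) hp]

theorem dInf_diagNorm_exp_mul :
    dInf (diagNorm e fun i => Real.exp (s * a i)) (diagNorm e fun i => Real.exp (t * a i)) =
      |t - s| * ⨆ i, |a i| := by
  rw [diagNorm_exp_mul_eq e a s t, dInf_diagNorm e (fun i => Real.exp_pos _),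
    Real.mul_iSup_of_nonneg (abs_nonneg _)]
  simp only [abs_mul]

end Geodesic

theorem distinguished_geodesic_distance_general
    {V : Type*} [AddCommGroup V] [Module ℂ V]
    {n : ℕ}
    (c₀ c₁ : InnerProductSpace.Core ℂ V) (e : Module.Basis (Fin n) ℂ V)
    (he₀ : OrthogonalFor c₀ (⇑e)) (he₁ : OrthogonalFor c₁ (⇑e))
    (hunit : ∀ i : Fin n, hnorm c₀ (e i) = 1)
    (c : ℝ → InnerProductSpace.Core ℂ V)
    (hce : ∀ t : ℝ, 0 ≤ t → t ≤ 1 → OrthogonalFor (c t) (⇑e))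
    (hct : ∀ t : ℝ, 0 ≤ t → t ≤ 1 → ∀ i : Fin n, hnorm (c t) (e i) = hnorm c₁ (e i) ^ t) :
    ∀ s t : ℝ, 0 ≤ s → s ≤ 1 → 0 ≤ t → t ≤ 1 →
      (∀ p : ℝ, 1 ≤ p →
        dp p (hnorm (c s)) (hnorm (c t)) = |t - s| * dp p (hnorm c₀) (hnorm c₁)) ∧
      dInf (hnorm (c s)) (hnorm (c t)) = |t - s| * dInf (hnorm c₀) (hnorm c₁) := by
  intro s t hs₀ hs₁ ht₀ ht₁
  set a : Fin n → ℝ := fun i => Real.log (hnorm c₁ (e i))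
  have hc₁_pos (i : Fin n) : 0 < hnorm c₁ (e i) := hnorm_pos c₁ (e.ne_zero i)
  have hH₀ : hnorm c₀ = diagNorm e fun i => Real.exp (0 * a i) := by
    refine (hnorm_eq_diagNorm c₀ e he₀).trans ?_
    simp only [hunit, zero_mul, Real.exp_zero]
  have hH₁ : hnorm c₁ = diagNorm e fun i => Real.exp (1 * a i) := by
    refine (hnorm_eq_diagNorm c₁ e he₁).trans ?_
    simp only [one_mul, a, Real.exp_log (hc₁_pos _)]
  have hH (τ : ℝ) (hτ₀ : 0 ≤ τ) (hτ₁ : τ ≤ 1) :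
      hnorm (c τ) = diagNorm e fun i => Real.exp (τ * a i) := by
    refine (hnorm_eq_diagNorm (c τ) e (hce τ hτ₀ hτ₁)).trans ?_
    simp only [hct τ hτ₀ hτ₁, Real.rpow_def_of_pos (hc₁_pos _), mul_comm τ, a]
  refine ⟨fun p hp => ?_, ?_⟩
  · rw [hH s hs₀ hs₁, hH t ht₀ ht₁, hH₀, hH₁, dp_diagNorm_exp_mul e a s t (by positivity),
      dp_diagNorm_exp_mul e a 0 1 (by positivity), sub_zero, abs_one, one_mul]
  · rw [hH s hs₀ hs₁, hH t ht₀ ht₁, hH₀, hH₁, dInf_diagNorm_exp_mul, dInf_diagNorm_exp_mul,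
      sub_zero, abs_one, one_mul]

/-- along the distinguished geodesic `H_t` between two Hermitian norms
(`H_t` diagonalized by a common basis `e` with `‖eᵢ‖_{H_t} = ‖eᵢ‖_{H₁}^t`), for every
`p ∈ [1,∞]` and `s, t ∈ [0,1]`, `d_p(H_s, H_t) = |t−s| · d_p(H₀,H₁)`. -/
theorem distinguished_geodesic_distance
    {V : Type*} [AddCommGroup V] [Module ℂ V] [FiniteDimensional ℂ V]
    {n : ℕ} (hn : 1 ≤ n) (hdim : Module.finrank ℂ V = n)
    (c₀ c₁ : InnerProductSpace.Core ℂ V) (e : Module.Basis (Fin n) ℂ V)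
    (he₀ : OrthogonalFor c₀ (⇑e)) (he₁ : OrthogonalFor c₁ (⇑e))
    (hunit : ∀ i : Fin n, hnorm c₀ (e i) = 1)
    (c : ℝ → InnerProductSpace.Core ℂ V)
    (hce : ∀ t : ℝ, 0 ≤ t → t ≤ 1 → OrthogonalFor (c t) (⇑e))
    (hct : ∀ t : ℝ, 0 ≤ t → t ≤ 1 → ∀ i : Fin n, hnorm (c t) (e i) = hnorm c₁ (e i) ^ t) :
    ∀ s t : ℝ, 0 ≤ s → s ≤ 1 → 0 ≤ t → t ≤ 1 →
      (∀ p : ℝ, 1 ≤ p →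
        dp p (hnorm (c s)) (hnorm (c t)) = |t - s| * dp p (hnorm c₀) (hnorm c₁)) ∧
      dInf (hnorm (c s)) (hnorm (c t)) = |t - s| * dInf (hnorm c₀) (hnorm c₁) :=
  distinguished_geodesic_distance_general c₀ c₁ e he₀ he₁ hunit c hce hct
end
end
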